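/- arXiv:0705.1507 — 5 statements merged into one kernel-verified Lean document; each statement's English description precedes it below -/
import Mathlib

section
/- If a dBV algebra (C, ·, Δ, Q) has the ΔQ-property, i.e., (Ker Q ∩ Ker Δ) ∩ (Im Δ ⊕ Im Q) = Im ΔQ = Im QΔ, then it is semi-classical: every cohomology class of the complex (C, Q) has a representative lying in Ker Δ. -/
/-- A ℤ-graded super-commutative associative unital algebra over `k`,
presented via a family of grading submodules, a bilinear product, and
Koszul-sign commutativity on homogeneous elements. -/
structure GCA (k C : Type) [Field k] [AddCommGroup C] [Module k C] where
  grade : ℤ → Submodule k C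
  mul : C →ₗ[k] C →ₗ[k] C
  one : C
  one_mem : one ∈ grade 0
  one_mul : ∀ a : C, mul one a = a
  mul_one : ∀ a : C, mul a one = a
  mul_assoc : ∀ a b c : C, mul (mul a b) c = mul a (mul b c)
  mul_mem : ∀ {m n : ℤ} {a b : C}, a ∈ grade m → b ∈ grade n → mul a b ∈ grade (m + n)
  supercomm : ∀ {m n : ℤ} {a b : C}, a ∈ grade m → b ∈ grade n →
    mul a b = ((m * n).negOnePow : ℤ) • mul b a

variable {k C : Type} [Field k] [AddCommGroup C] [Module k C]

/-- The BV bracket of a homogeneous element `a` of ghost number `m` with `b`: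
`(-1)^{|a|}(a,b) := Δ(a·b) - (Δa)·b - (-1)^{|a|} a·(Δb)`. -/
def bvBracket (G : GCA k C) (D : C →ₗ[k] C) (m : ℤ) (a b : C) : C :=
  (m.negOnePow : ℤ) •
    (D (G.mul a b) - G.mul (D a) b - (m.negOnePow : ℤ) • G.mul a (D b))

/-- A differential Batalin-Vilkovisky algebra: a graded super-commutative algebra
with square-zero degree-one operators `Q` (a derivation) and `Dd` (the BV operator Δ),
anticommuting with each other, whose bracket obeys the super-Poisson law. -/
structure DBV (k C : Type) [Field k] [AddCommGroup C] [Module k C] extends GCA k C where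
  Q : C →ₗ[k] C
  Dd : C →ₗ[k] C
  Q_mem : ∀ {n : ℤ} {a : C}, a ∈ grade n → Q a ∈ grade (n + 1)
  Dd_mem : ∀ {n : ℤ} {a : C}, a ∈ grade n → Dd a ∈ grade (n + 1)
  Q_sq : ∀ a : C, Q (Q a) = 0
  Dd_sq : ∀ a : C, Dd (Dd a) = 0
  QDd : ∀ a : C, Q (Dd a) + Dd (Q a) = 0
  Q_deriv : ∀ {m : ℤ} {a b : C}, a ∈ grade m →
    Q (mul a b) = mul (Q a) b + (m.negOnePow : ℤ) • mul a (Q b)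
  poisson : ∀ {m n : ℤ} {a b c : C}, a ∈ grade m → b ∈ grade n →
    bvBracket toGCA Dd m a (mul b c)
      = mul (bvBracket toGCA Dd m a b) c
        + (((m + 1) * n).negOnePow : ℤ) • mul b (bvBracket toGCA Dd m a c)

/-! For a `Q`-cocycle `y`, `Δy` is `Q`-closed (as `QΔ = -ΔQ`) and `Δ`-exact, so the
ΔQ-property writes it as `-ΔQz`; then `y + Qz` is a `Δ`-closed representative of the class of `y`. -/

namespace DBV

variable (B : DBV k C)

def HasDeltaQProperty : Prop :=
  ∀ x : C, B.Q x = 0 → (∃ y : C, x = B.Dd y) → ∃ z : C, x = B.Q (B.Dd z) ∧ x = -B.Dd (B.Q z)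

def IsSemiclassical : Prop :=
  ∀ y : C, B.Q y = 0 → ∃ y' : C, B.Dd y' = 0 ∧ B.Q y' = 0 ∧ ∃ z : C, y' = y - B.Q z

theorem Q_Dd_eq_neg_Dd_Q (a : C) : B.Q (B.Dd a) = -B.Dd (B.Q a) :=
  eq_neg_of_add_eq_zero_left (B.QDd a)

theorem Q_Dd_eq_zero_of_Q_eq_zero {y : C} (hy : B.Q y = 0) : B.Q (B.Dd y) = 0 := by
  rw [Q_Dd_eq_neg_Dd_Q, hy, map_zero, neg_zero]

theorem Q_add_Q (y z : C) : B.Q (y + B.Q z) = B.Q y := by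
  rw [map_add, B.Q_sq, add_zero]

theorem Dd_add_Q_eq_zero {y z : C} (h : B.Dd y = -B.Dd (B.Q z)) : B.Dd (y + B.Q z) = 0 := by
  rw [map_add, h, neg_add_cancel]

theorem isSemiclassical_of_hasDeltaQProperty (h : B.HasDeltaQProperty) : B.IsSemiclassical := by
  intro y hy
  obtain ⟨z, -, hz⟩ := h (B.Dd y) (B.Q_Dd_eq_zero_of_Q_eq_zero hy) ⟨y, rfl⟩
  exact ⟨y + B.Q z, B.Dd_add_Q_eq_zero hz, by rw [Q_add_Q, hy], -z,
    by rw [map_neg, sub_neg_eq_add]⟩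

end DBV

theorem deltaQ_property_implies_semiclassical_general (B : DBV k C)
    (hDQ : ∀ x : C, B.Q x = 0 → (∃ y : C, x = B.Dd y) →
      ∃ z : C, x = B.Q (B.Dd z) ∧ x = -B.Dd (B.Q z)) :
    ∀ y : C, B.Q y = 0 →
      ∃ y' : C, B.Dd y' = 0 ∧ B.Q y' = 0 ∧ ∃ z : C, y' = y - B.Q z :=
  B.isSemiclassical_of_hasDeltaQProperty hDQ

/-- a dBV algebra with the ΔQ-property (any `x` with `Qx = 0` lying
in the image of `Δ` is of the form `x = QΔz = -ΔQz`) is semi-classical: every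
`Q`-cohomology class has a representative lying in `Ker Δ`. -/
theorem deltaQ_property_implies_semiclassical [CharZero k] (B : DBV k C)
    (hDQ : ∀ x : C, B.Q x = 0 → (∃ y : C, x = B.Dd y) →
      ∃ z : C, x = B.Q (B.Dd z) ∧ x = -B.Dd (B.Q z)) :
    ∀ y : C, B.Q y = 0 →
      ∃ y' : C, B.Dd y' = 0 ∧ B.Q y' = 0 ∧ ∃ z : C, y' = y - B.Q z :=
  deltaQ_property_implies_semiclassical_general B hDQ
end

section
/- Let (C, Q, ( , )) be a DGLA and suppose O^{[j]} (j ≥ 1) are degree-0 elements with O^{[j+1]} = (1/(j+1)) tᵅ O^{[j]}_α, where the O^{[k]}_α satisfy Q O^{[k]}_α = -Σ_{j=1}^{k} (O^{[j]}, O^{[k-j]}_α) for all 0 ≤ k ≤ n. Then for each 0 ≤ k ≤ n, Q O^{[k+1]} + ½ Σ_{j=1}^{k} (O^{[k-j+1]}, O^{[j]}) = 0. -/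
/-!
Apply `Q` to `(k+1) O⁽ᵏ⁺¹⁾ = tᵅ O⁽ᵏ⁾_α`. Since `tᵅ` commutes with `Q` and with the brackets
`(O⁽ʲ⁾, -)` up to the same sign, the Maurer–Cartan equations for the coefficients give
`(k+1) Q O⁽ᵏ⁺¹⁾ = -Σⱼ (O⁽ʲ⁾, tᵅ O⁽ᵏ⁻ʲ⁾_α) = -Σⱼ (k-j+1) (O⁽ʲ⁾, O⁽ᵏ⁻ʲ⁺¹⁾)`.
Symmetrising this sum under `j ↦ k+1-j` replaces the weight `k-j+1` by the average
`(k+1)/2`, which is the claim after dividing by `k+1`.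
-/

open Finset

theorem Finset.sum_Icc_one_reflect {M : Type*} [AddCommMonoid M] (f : ℕ → M) (m : ℕ) :
    ∑ j ∈ Icc 1 m, f (m - j + 1) = ∑ j ∈ Icc 1 m, f j := by
  refine sum_nbij' (fun j => m - j + 1) (fun j => m - j + 1) ?_ ?_ ?_ ?_ (fun _ _ => rfl) <;>
    intro j hj <;> simp only [mem_Icc] at * <;> omega

theorem two_nsmul_sum_weighted_of_symm {M : Type*} [AddCommMonoid M] (B : ℕ → ℕ → M)
    (hB : ∀ i j, B i j = B j i) (m : ℕ) :
    2 • ∑ j ∈ Icc 1 m, (m - j + 1) • B j (m - j + 1)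
      = (m + 1) • ∑ j ∈ Icc 1 m, B (m - j + 1) j := by
  have reflected : ∑ j ∈ Icc 1 m, (m - j + 1) • B j (m - j + 1)
      = ∑ j ∈ Icc 1 m, j • B (m - j + 1) j := by
    rw [← sum_Icc_one_reflect (fun j => j • B (m - j + 1) j)]
    refine sum_congr rfl fun j hj => ?_
    have hj' := mem_Icc.mp hj
    rw [show m - (m - j + 1) + 1 = j by omega, hB]
  rw [two_nsmul]
  nth_rewrite 2 [reflected]
  rw [← sum_add_distrib, smul_sum]
  refine sum_congr rfl fun j hj => ?_
  have hj' := mem_Icc.mp hj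
  rw [hB, ← add_nsmul, show m - j + 1 + j = m + 1 by omega]

theorem add_inv_two_smul_eq_zero_of_nsmul {k L : Type*} [Field k] [CharZero k]
    [AddCommGroup L] [Module k L] {x S T : L} {m : ℕ}
    (hx : (m + 1) • x = -T) (hS : (m + 1) • S = 2 • T) : x + (2 : k)⁻¹ • S = 0 := by
  have : (m + 1) • (x + (2 : k)⁻¹ • S) = 0 := by
    rw [smul_add, smul_comm, hS, hx, ← Nat.cast_smul_eq_nsmul k 2 T, Nat.cast_ofNat,
      inv_smul_smul₀ two_ne_zero, neg_add_cancel]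
  rw [← Nat.cast_smul_eq_nsmul k] at this
  exact (smul_eq_zero.mp this).resolve_left (Nat.cast_ne_zero.mpr m.succ_ne_zero)

section SignedDerivation

variable {k L : Type*} [CommSemiring k] [AddCommGroup L] [Module k L]
  (Qd : L →ₗ[k] L) (br : L →ₗ[k] L →ₗ[k] L) (O : ℕ → L)

theorem map_apply_eq_neg_sum_of_signed_comm (s : Finset ℕ) (T : L →ₗ[k] L) (ε : ℤ)
    (hQT : ∀ x, ε • T (Qd x) = Qd (T x))
    (hbrT : ∀ i y, ε • T (br (O i) y) = br (O i) (T y))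
    {x : L} {y : ℕ → L} (hx : Qd x = -∑ j ∈ s, br (O j) (y j)) :
    Qd (T x) = -∑ j ∈ s, br (O j) (T (y j)) := by
  rw [← hQT, hx, map_neg, map_sum, smul_neg, smul_sum]
  exact congrArg _ (sum_congr rfl fun j _ => hbrT _ _)

theorem nsmul_map_succ_eq_neg_sum {A : Type*} [Fintype A] (g : A → ℤ) (t : A → L →ₗ[k] L)
    (Oa : ℕ → A → L) (m : ℕ)
    (hQt : ∀ a x, ((g a).negOnePow : ℤ) • t a (Qd x) = Qd (t a x))
    (hbrt : ∀ a i y, ((g a).negOnePow : ℤ) • t a (br (O i) y) = br (O i) (t a y))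
    (hcontr : ∀ i ≤ m, (i + 1) • O (i + 1) = ∑ a, t a (Oa i a))
    (hmc : ∀ a, Qd (Oa m a) = -∑ j ∈ Icc 1 m, br (O j) (Oa (m - j) a)) :
    (m + 1) • Qd (O (m + 1)) = -∑ j ∈ Icc 1 m, (m - j + 1) • br (O j) (O (m - j + 1)) := by
  have hQ_contract : ∀ a, Qd (t a (Oa m a)) = -∑ j ∈ Icc 1 m, br (O j) (t a (Oa (m - j) a)) :=
    fun a => map_apply_eq_neg_sum_of_signed_comm Qd br O _ (t a) _ (hQt a) (hbrt a) (hmc a)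
  rw [← map_nsmul, hcontr m le_rfl, map_sum, sum_congr rfl fun a _ => hQ_contract a,
    sum_neg_distrib, sum_comm]
  refine congrArg _ (sum_congr rfl fun j _ => ?_)
  rw [← map_sum, ← hcontr (m - j) (Nat.sub_le m j), map_nsmul]

end SignedDerivation

/-- Lemma 18: in a DGLA `(L, Q, ( , ))` over `k`, suppose degree-0
elements `O⁽ʲ⁾` are built from families `O⁽ʲ⁾_α ∈ (C ⊗ Sʲ(H*))^{|O_α|}` by
contraction with the dual coordinates, `O⁽ʲ⁺¹⁾ = (1/(j+1)) tᵅ O⁽ʲ⁾_α` (here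
`t a` is the operator "multiply by tᵅ", `g a = |O_α|`, and the signs
`(-1)^{|α|}` implement moving `tᵅ` past `Q` and past the degree-0 brackets),
and `Q O⁽ᵏ⁾_α = -Σ_{j=1}^{k} (O⁽ʲ⁾, O⁽ᵏ⁻ʲ⁾_α)` holds for all `0 ≤ k ≤ n`.
Then `Q O⁽ᵏ⁺¹⁾ + ½ Σ_{j=1}^{k} (O⁽ᵏ⁻ʲ⁺¹⁾, O⁽ʲ⁾) = 0` for all `0 ≤ k ≤ n`. -/
theorem maurer_cartan_from_coefficients
    {k L A : Type} [Field k] [CharZero k] [AddCommGroup L] [Module k L] [Fintype A]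
    (Qd : L →ₗ[k] L) (br : L →ₗ[k] L →ₗ[k] L)
    (g : A → ℤ) (t : A → L →ₗ[k] L)
    (O : ℕ → L) (Oa : ℕ → A → L) (n : ℕ)
    (hQt : ∀ (a : A) (x : L), ((g a).negOnePow : ℤ) • t a (Qd x) = Qd (t a x))
    (hbrt : ∀ (a : A) (i : ℕ) (y : L),
      ((g a).negOnePow : ℤ) • t a (br (O i) y) = br (O i) (t a y))
    (hsymm : ∀ i j : ℕ, br (O i) (O j) = br (O j) (O i))
    (hcontr : ∀ k' : ℕ, k' ≤ n → (k' + 1) • O (k' + 1) = ∑ a : A, t a (Oa k' a))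
    (hmc : ∀ k' : ℕ, k' ≤ n → ∀ a : A,
      Qd (Oa k' a) = -∑ j ∈ Finset.Icc 1 k', br (O j) (Oa (k' - j) a)) :
    ∀ k' : ℕ, k' ≤ n →
      Qd (O (k' + 1))
        + (2 : k)⁻¹ • ∑ j ∈ Finset.Icc 1 k', br (O (k' - j + 1)) (O j) = 0 := by
  intro k' hk'
  exact add_inv_two_smul_eq_zero_of_nsmul
    (nsmul_map_succ_eq_neg_sum Qd br O g t Oa k' hQt hbrt
      (fun i hi => hcontr i (hi.trans hk')) (hmc k' hk'))
    (two_nsmul_sum_weighted_of_symm (fun i j => br (O i) (O j)) hsymm k').symm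
end

section
/- Given a special versal solution O with structure constants A_{αβ}^γ satisfying O_α·O_β = A_{αβ}^γ O_γ + 𝒬L_{αβ}, the structure constants are graded-commutative and associative: A_{αβ}^γ = (-1)^{|α||β|} A_{βα}^γ and A_{βγ}^ρ A_{αρ}^σ = (-1)^{|α||β|} A_{αγ}^ρ A_{βρ}^σ. -/
variable {k C : Type} [Field k] [AddCommGroup C] [Module k C]

/-!
Write `x ≃ ∑ c a • O a` when `x` differs from `∑ c a • O a` by a `𝒬`-exact element. Left
multiplication by a `𝒬`-closed element `O a` preserves this relation, because
`O a · 𝒬 y = ± 𝒬 (O a · y)` by the Leibniz rule; on coefficients it acts through the matrix of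
structure constants `A_{a r}^s`. Hence `O_a O_b ≃ ∑ A_{ab}^γ O_γ` and
`O_a (O_b O_c) ≃ ∑ A_{bc}^ρ A_{aρ}^σ O_σ`. Graded commutativity relates `O_a O_b` to `O_b O_a`,
and together with associativity `O_a (O_b O_c)` to `O_b (O_a O_c)`, each up to the sign
`(-1)^{|a||b|}`; since the classes of the `O_σ` are linearly independent in cohomology,
the coefficients of the two sides agree.
-/

namespace GCA

theorem mul_left_comm (𝒜 : GCA k C) {m n : ℤ} {x y : C} (hx : x ∈ 𝒜.grade m)
    (hy : y ∈ 𝒜.grade n) (z : C) :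
    𝒜.mul x (𝒜.mul y z) = ((m * n).negOnePow : ℤ) • 𝒜.mul y (𝒜.mul x z) := by
  rw [← 𝒜.mul_assoc, ← 𝒜.mul_assoc, 𝒜.supercomm hx hy, map_zsmul, LinearMap.smul_apply]

theorem mul_map_eq_map_of_map_eq_zero (𝒜 : GCA k C) (Q : C →+ C)
    (hQ : ∀ (m : ℤ) (x y : C), x ∈ 𝒜.grade m →
      Q (𝒜.mul x y) = 𝒜.mul (Q x) y + (m.negOnePow : ℤ) • 𝒜.mul x (Q y))
    {m : ℤ} {x : C} (hx : x ∈ 𝒜.grade m) (hQx : Q x = 0) (y : C) :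
    𝒜.mul x (Q y) = Q ((m.negOnePow : ℤ) • 𝒜.mul x y) := by
  rw [map_zsmul, hQ m x y hx, hQx, map_zero, LinearMap.zero_apply, zero_add, smul_smul,
    ← Units.val_mul, Int.units_mul_self, Units.val_one, one_smul]

end GCA

section CohomCoeffs

variable {R A : Type*} [CommRing R] [Module R C] [Fintype A]

def HasCohomCoeffs (Q : C →+ C) (O : A → C) (x : C) (c : A → R) : Prop :=
  ∃ y, x = ∑ a, c a • O a + Q y

variable {Q : C →+ C} {O : A → C}

theorem hasCohomCoeffs_map (y : C) : HasCohomCoeffs Q O (Q y) (0 : A → R) :=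
  ⟨y, by simp⟩

theorem HasCohomCoeffs.add {x x' : C} {c c' : A → R} (h : HasCohomCoeffs Q O x c)
    (h' : HasCohomCoeffs Q O x' c') : HasCohomCoeffs Q O (x + x') (c + c') := by
  obtain ⟨y, rfl⟩ := h
  obtain ⟨y', rfl⟩ := h'
  refine ⟨y + y', ?_⟩
  simp only [Pi.add_apply, add_smul, Finset.sum_add_distrib, map_add]
  abel

theorem HasCohomCoeffs.smul (hQ : ∀ (r : R) (x : C), Q (r • x) = r • Q x) (r : R) {x : C}
    {c : A → R} (h : HasCohomCoeffs Q O x c) : HasCohomCoeffs Q O (r • x) (r • c) := by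
  obtain ⟨y, rfl⟩ := h
  exact ⟨r • y, by simp only [smul_add, Finset.smul_sum, Pi.smul_apply, smul_assoc, hQ]⟩

theorem HasCohomCoeffs.zsmul (n : ℤ) {x : C} {c : A → R} (h : HasCohomCoeffs Q O x c) :
    HasCohomCoeffs Q O (n • x) (n • c) := by
  obtain ⟨y, rfl⟩ := h
  exact ⟨n • y, by simp only [smul_add, Finset.smul_sum, Pi.smul_apply, smul_assoc, map_zsmul]⟩

theorem HasCohomCoeffs.sum {ι : Type*} (s : Finset ι) {x : ι → C} {c : ι → A → R}
    (h : ∀ i ∈ s, HasCohomCoeffs Q O (x i) (c i)) :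
    HasCohomCoeffs Q O (∑ i ∈ s, x i) (∑ i ∈ s, c i) := by
  classical
  induction s using Finset.induction_on with
  | empty => simpa using hasCohomCoeffs_map (Q := Q) (O := O) (R := R) 0
  | insert i s hi ih =>
    rw [Finset.sum_insert hi, Finset.sum_insert hi]
    exact (h i (s.mem_insert_self i)).add (ih fun j hj => h j (Finset.mem_insert_of_mem hj))

theorem HasCohomCoeffs.unique
    (hO : ∀ (c : A → R) (y : C), ∑ a, c a • O a = Q y → ∀ a, c a = 0) {x : C}
    {c d : A → R} (hc : HasCohomCoeffs Q O x c) (hd : HasCohomCoeffs Q O x d) : c = d := by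
  obtain ⟨y, hy⟩ := hc
  obtain ⟨z, hz⟩ := hd
  have hexact : ∑ a, (c - d) a • O a = Q (z - y) := by
    simp only [Pi.sub_apply, sub_smul, Finset.sum_sub_distrib, map_sub]
    rw [sub_eq_sub_iff_add_eq_add, ← hy, hz, add_comm]
  funext a
  exact sub_eq_zero.mp (hO _ _ hexact a)

theorem HasCohomCoeffs.mul_left (𝒜 : GCA k C)
    (hQR : ∀ (r : R) (x : C), Q (r • x) = r • Q x)
    (h𝒜R : ∀ (r : R) (x y : C), 𝒜.mul x (r • y) = r • 𝒜.mul x y)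
    (hQ : ∀ (m : ℤ) (x y : C), x ∈ 𝒜.grade m →
      Q (𝒜.mul x y) = 𝒜.mul (Q x) y + (m.negOnePow : ℤ) • 𝒜.mul x (Q y))
    {m : ℤ} {u : C} (hu : u ∈ 𝒜.grade m) (hQu : Q u = 0) {M : A → A → R}
    (hM : ∀ r, HasCohomCoeffs Q O (𝒜.mul u (O r)) (M r)) {x : C} {c : A → R}
    (h : HasCohomCoeffs Q O x c) :
    HasCohomCoeffs Q O (𝒜.mul u x) (fun s => ∑ r, c r * M r s) := by
  obtain ⟨y, rfl⟩ := h
  have hsum : HasCohomCoeffs Q O (∑ r, c r • 𝒜.mul u (O r)) (∑ r, c r • M r) :=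
    HasCohomCoeffs.sum _ fun r _ => (hM r).smul hQR (c r)
  have hexact : HasCohomCoeffs Q O (𝒜.mul u (Q y)) (0 : A → R) := by
    rw [𝒜.mul_map_eq_map_of_map_eq_zero Q hQ hu hQu]
    exact hasCohomCoeffs_map _
  convert hsum.add hexact using 1
  · simp only [map_add, map_sum, h𝒜R]
  · ext s
    simp [Finset.sum_apply]

end CohomCoeffs

theorem structure_constants_comm_assoc_general
    {R A : Type} [CommRing R] [Module R C]
    [Fintype A]
    (𝒜 : GCA k C) (Qv : C →+ C)
    (hQvR : ∀ (r : R) (x : C), Qv (r • x) = r • Qv x)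
    (hRmul₂ : ∀ (r : R) (x y : C), 𝒜.mul x (r • y) = r • 𝒜.mul x y)
    (hQvderiv : ∀ (m : ℤ) (x y : C), x ∈ 𝒜.grade m →
      Qv (𝒜.mul x y) = 𝒜.mul (Qv x) y + (m.negOnePow : ℤ) • 𝒜.mul x (Qv y))
    (g : A → ℤ) (Oa : A → C) (L : A → A → C) (Aco : A → A → A → R)
    (hOmem : ∀ a, Oa a ∈ 𝒜.grade (g a))
    (hQvOa : ∀ a, Qv (Oa a) = 0)
    (hindep : ∀ (c : A → R) (y : C), (∑ a : A, c a • Oa a) = Qv y → ∀ a, c a = 0)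
    (hrel : ∀ a b : A,
      𝒜.mul (Oa a) (Oa b) = (∑ r : A, Aco a b r • Oa r) + Qv (L a b)) :
    (∀ a b r : A, Aco a b r = ((g a * g b).negOnePow : ℤ) • Aco b a r) ∧
    (∀ a b c s : A,
      (∑ r : A, Aco b c r * Aco a r s)
        = ((g a * g b).negOnePow : ℤ) • ∑ r : A, Aco a c r * Aco b r s) := by
  have hprod : ∀ a b, HasCohomCoeffs Qv Oa (𝒜.mul (Oa a) (Oa b)) (Aco a b) :=
    fun a b => ⟨L a b, hrel a b⟩
  have htriple : ∀ a b c, HasCohomCoeffs Qv Oa (𝒜.mul (Oa a) (𝒜.mul (Oa b) (Oa c)))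
      (fun s => ∑ r, Aco b c r * Aco a r s) := fun a b c =>
    (hprod b c).mul_left 𝒜 hQvR hRmul₂ hQvderiv (hOmem a) (hQvOa a) (hprod a)
  refine ⟨fun a b r => ?_, fun a b c s => ?_⟩
  · have hswap := (hprod b a).zsmul ((g a * g b).negOnePow : ℤ)
    rw [← 𝒜.supercomm (hOmem a) (hOmem b)] at hswap
    exact congrFun ((hprod a b).unique hindep hswap) r
  · have hswap := (htriple b a c).zsmul ((g a * g b).negOnePow : ℤ)
    rw [← 𝒜.mul_left_comm (hOmem a) (hOmem b)] at hswap
    exact congrFun ((htriple a b c).unique hindep hswap) s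

/-- Theorem 12, first two relations: in the versal (semi-classical)
algebra `E = C ⊗ k[[H*]]` — a graded super-commutative algebra over `k` that is a
module over the coefficient ring `R = k[[H*]]` — with versal differential `Qv = 𝒬`
(square-zero, `R`-linear, a graded derivation of the product), let `Oa α`
(of ghost number `g α`) be `𝒬`-closed representatives of a basis of the
`𝒬`-cohomology (so any `R`-linear combination of them that is `𝒬`-exact has zero
coefficients), satisfying `O_α·O_β = A_{αβ}^γ • O_γ + 𝒬 L_{αβ}`.  Then the
structure constants are graded-commutative and associative:
`A_{αβ}^γ = (-1)^{|α||β|} A_{βα}^γ` and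
`A_{βγ}^ρ A_{αρ}^σ = (-1)^{|α||β|} A_{αγ}^ρ A_{βρ}^σ`. -/
theorem structure_constants_comm_assoc [CharZero k]
    {R A : Type} [CommRing R] [Algebra k R] [Module R C] [IsScalarTower k R C]
    [Fintype A]
    (𝒜 : GCA k C) (Qv : C →+ C)
    (hQvR : ∀ (r : R) (x : C), Qv (r • x) = r • Qv x)
    (hQv2 : ∀ x : C, Qv (Qv x) = 0)
    (hRmul₁ : ∀ (r : R) (x y : C), 𝒜.mul (r • x) y = r • 𝒜.mul x y)
    (hRmul₂ : ∀ (r : R) (x y : C), 𝒜.mul x (r • y) = r • 𝒜.mul x y)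
    (hRgrade : ∀ (r : R) (m : ℤ) (x : C), x ∈ 𝒜.grade m → r • x ∈ 𝒜.grade m)
    (hQvderiv : ∀ (m : ℤ) (x y : C), x ∈ 𝒜.grade m →
      Qv (𝒜.mul x y) = 𝒜.mul (Qv x) y + (m.negOnePow : ℤ) • 𝒜.mul x (Qv y))
    (g : A → ℤ) (Oa : A → C) (L : A → A → C) (Aco : A → A → A → R)
    (hOmem : ∀ a, Oa a ∈ 𝒜.grade (g a))
    (hQvOa : ∀ a, Qv (Oa a) = 0)
    (hindep : ∀ (c : A → R) (y : C), (∑ a : A, c a • Oa a) = Qv y → ∀ a, c a = 0)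
    (hrel : ∀ a b : A,
      𝒜.mul (Oa a) (Oa b) = (∑ r : A, Aco a b r • Oa r) + Qv (L a b)) :
    (∀ a b r : A, Aco a b r = ((g a * g b).negOnePow : ℤ) • Aco b a r) ∧
    (∀ a b c s : A,
      (∑ r : A, Aco b c r * Aco a r s)
        = ((g a * g b).negOnePow : ℤ) • ∑ r : A, Aco a c r * Aco b r s) :=
  structure_constants_comm_assoc_general 𝒜 Qv hQvR hRmul₂ hQvderiv g Oa L Aco hOmem hQvOa hindep
    hrel
end

section
/- Given a special versal solution O in a semi-classical dBV algebra, with O_α·O_β = A_{αβ}^γ O_γ + 𝒬L_{αβ} and O_{αβ} = ΔL_{αβ}, the potentiality (flatness) relation holds: ∂_α A_{βγ}^ρ = (-1)^{|α||β|} ∂_β A_{αγ}^ρ. Consequently (A)_β^γ := dtᵅ A_{αβ}^γ is the connection 1-form of a linear pencil of torsion-free flat connections. -/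
variable {k C : Type} [Field k] [AddCommGroup C] [Module k C]

/-!
Differentiate the product relation `O_β·O_γ = A_{βγ}^σ O_σ + 𝒬L_{βγ}` along `tᵅ` and
antisymmetrise in `α, β`. Modulo `𝒬`-coboundaries, the combination
`∑_σ (∂_α A_{βγ}^σ - ± ∂_β A_{αγ}^σ) O_σ` reduces to `Δ(L_{αβ} ∓ L_{βα})·O_γ + ΔW`, where `W` is
the primitive relating the two bracketings of `O_α O_β O_γ`. Graded commutativity and associativity
make `L_{αβ} ∓ L_{βα}` and `W` into `𝒬`-cocycles, and `Δ` of a `𝒬`-cocycle is a `𝒬`-coboundary,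
because `Δ` anticommutes with `𝒬`, kills every `O_σ`, and the `[O_σ]` span the cohomology; a
coboundary times the cocycle `O_γ` is again a coboundary. So the whole combination is exact, and
independence of the `[O_σ]` kills its coefficients.
-/

open Finset

theorem negOnePow_smul_negOnePow_smul {M : Type*} [AddCommGroup M] (n : ℤ) (x : M) :
    (n.negOnePow : ℤ) • (n.negOnePow : ℤ) • x = x := by
  rw [smul_smul, ← Units.val_mul, Int.units_mul_self, Units.val_one, one_smul]

theorem sum_sub_zsmul_smul {R M A : Type*} [CommRing R] [AddCommGroup M] [Module R M]
    [Fintype A] (f h : A → R) (ε : ℤ) (e : A → M) :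
    ∑ s, (f s - ε • h s) • e s = ∑ s, f s • e s - ε • ∑ s, h s • e s := by
  simp only [sub_smul, sum_sub_distrib, smul_assoc, smul_sum]

namespace GCA

variable {R A : Type*} [CommRing R] [Module R C] [Fintype A]

def IsOddDerivation (G : GCA k C) (d : C →+ C) : Prop :=
  ∀ ⦃m : ℤ⦄ ⦃x : C⦄, x ∈ G.grade m →
    ∀ y, d (G.mul x y) = G.mul (d x) y + (m.negOnePow : ℤ) • G.mul x (d y)

structure IsStructureConstants (G : GCA k C) (d : C →+ C) (g : A → ℤ) (e : A → C)
    (Aco : A → A → A → R) (L : A → A → C) : Prop where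
  mem : ∀ a, e a ∈ G.grade (g a)
  map_eq_zero : ∀ a, d (e a) = 0
  mul_eq : ∀ a b, G.mul (e a) (e b) = ∑ s, Aco a b s • e s + d (L a b)
  coeff_eq_zero : ∀ (c : A → R) (y : C), ∑ s, c s • e s = d y → ∀ s, c s = 0

/-- The `d`-primitive of `e x · (e y · e c) - ∑ t, (∑ s, A y c s * A x s t) • e t`. -/
def mulMulPrimitive (G : GCA k C) (g : A → ℤ) (e : A → C) (Aco : A → A → A → R)
    (L : A → A → C) (x y c : A) : C :=
  ∑ s, Aco y c s • L x s + ((g x).negOnePow : ℤ) • G.mul (e x) (L y c)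

variable {G : GCA k C} {d : C →+ C}

theorem IsOddDerivation.mul_map_of_map_eq_zero (hd : G.IsOddDerivation d) {m : ℤ} {x : C}
    (hx : x ∈ G.grade m) (hdx : d x = 0) (y : C) :
    G.mul x (d y) = (m.negOnePow : ℤ) • d (G.mul x y) := by
  rw [hd hx, hdx, map_zero, LinearMap.zero_apply, zero_add, negOnePow_smul_negOnePow_smul]

theorem IsOddDerivation.mul_mem_range (hd : G.IsOddDerivation d) {m n : ℤ} {z x : C}
    (hz : z ∈ d.range) (hzm : z ∈ G.grade m) (hx : x ∈ G.grade n) (hdx : d x = 0) :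
    G.mul z x ∈ d.range := by
  obtain ⟨w, rfl⟩ := hz
  rw [G.supercomm hzm hx, hd.mul_map_of_map_eq_zero hx hdx, ← map_zsmul, ← map_zsmul]
  exact ⟨_, rfl⟩

namespace IsStructureConstants

variable {g : A → ℤ} {e : A → C} {Aco : A → A → A → R} {L : A → A → C}

theorem map_eq_zero_of_sum_smul_eq (h : IsStructureConstants G d g e Aco L) {c : A → R}
    {y : C} (hy : ∑ s, c s • e s = d y) : d y = 0 := by
  rw [← hy]
  exact sum_eq_zero fun s _ => by rw [h.coeff_eq_zero c y hy s, zero_smul]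

theorem map_sub_zsmul_eq_zero (h : IsStructureConstants G d g e Aco L) (a b : A) :
    d (L a b - ((g a * g b).negOnePow : ℤ) • L b a) = 0 := by
  have hcomm := G.supercomm (h.mem a) (h.mem b)
  rw [h.mul_eq, h.mul_eq] at hcomm
  set ε : ℤ := ((g a * g b).negOnePow : ℤ)
  have hsum : ∑ s, (Aco a b s - ε • Aco b a s) • e s = d (ε • L b a - L a b) := by
    rw [sum_sub_zsmul_smul, map_sub, map_zsmul]
    linear_combination (norm := module) hcomm
  rw [← neg_sub, map_neg, h.map_eq_zero_of_sum_smul_eq hsum, neg_zero]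

theorem mul_mul_eq (h : IsStructureConstants G d g e Aco L) (hd : G.IsOddDerivation d)
    (hd_smul : ∀ (r : R) (y : C), d (r • y) = r • d y)
    (hmul_smul : ∀ (r : R) (x y : C), G.mul x (r • y) = r • G.mul x y) (x y c : A) :
    G.mul (e x) (G.mul (e y) (e c))
      = ∑ t, (∑ s, Aco y c s * Aco x s t) • e t + d (mulMulPrimitive G g e Aco L x y c) := by
  have hexpand : ∑ s, Aco y c s • G.mul (e x) (e s)
      = ∑ t, (∑ s, Aco y c s * Aco x s t) • e t + d (∑ s, Aco y c s • L x s) := by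
    simp only [h.mul_eq, smul_add, sum_add_distrib, smul_sum, smul_smul, map_sum, hd_smul]
    rw [sum_comm]
    simp only [sum_smul]
  rw [h.mul_eq, map_add, map_sum, hd.mul_map_of_map_eq_zero (h.mem x) (h.map_eq_zero x)]
  simp only [hmul_smul]
  rw [hexpand, mulMulPrimitive, map_add, map_zsmul, add_assoc]

theorem map_sub_mulMulPrimitive_eq_zero (h : IsStructureConstants G d g e Aco L)
    (hd : G.IsOddDerivation d) (hd_smul : ∀ (r : R) (y : C), d (r • y) = r • d y)
    (hmul_smul : ∀ (r : R) (x y : C), G.mul x (r • y) = r • G.mul x y) (a b c : A) :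
    d (((g a * g b).negOnePow : ℤ) • mulMulPrimitive G g e Aco L b a c
      - mulMulPrimitive G g e Aco L a b c) = 0 := by
  have hassoc : G.mul (e a) (G.mul (e b) (e c))
      = ((g a * g b).negOnePow : ℤ) • G.mul (e b) (G.mul (e a) (e c)) := by
    rw [← G.mul_assoc, ← G.mul_assoc, G.supercomm (h.mem a) (h.mem b), map_zsmul,
      LinearMap.smul_apply]
  rw [h.mul_mul_eq hd hd_smul hmul_smul, h.mul_mul_eq hd hd_smul hmul_smul] at hassoc
  set ε : ℤ := ((g a * g b).negOnePow : ℤ)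
  refine h.map_eq_zero_of_sum_smul_eq (c := fun t =>
    ∑ s, Aco b c s * Aco a s t - ε • ∑ s, Aco a c s * Aco b s t) ?_
  rw [sum_sub_zsmul_smul, map_sub, map_zsmul]
  linear_combination (norm := module) hassoc

end IsStructureConstants

end GCA

namespace DBV

variable {R A : Type*} [CommRing R] [Module R C] [Fintype A]

/-- `𝒬 = Q + (O, ·)`. -/
def twistedDiff (B : DBV k C) (O : C) : C →+ C :=
  AddMonoidHom.mk' (fun y => B.Q y + bvBracket B.toGCA B.Dd 0 O y) fun x y => by
    simp only [bvBracket, map_add]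
    module

theorem twistedDiff_apply (B : DBV k C) (O y : C) :
    B.twistedDiff O y = B.Q y + bvBracket B.toGCA B.Dd 0 O y := rfl

/-- Models `∂/∂tᵅ` of parity `n`, with `DR` its action on the coefficient ring `R`. -/
structure IsGradedDerivation (B : DBV k C) (n : ℤ) (D : C →+ C) (DR : R →+ R) : Prop where
  map_smul : ∀ (r : R) (x : C), D (r • x) = DR r • x + r • D x
  map_Q : ∀ x : C, D (B.Q x) = (n.negOnePow : ℤ) • B.Q (D x)
  mem : ∀ (m : ℤ) (x : C), x ∈ B.grade m → D x ∈ B.grade (m + n)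
  map_mul : ∀ (m : ℤ) (x y : C), x ∈ B.grade m →
    D (B.mul x y) = B.mul (D x) y + ((n * m).negOnePow : ℤ) • B.mul x (D y)
  map_bvBracket : ∀ (m : ℤ) (x y : C), x ∈ B.grade m →
    D (bvBracket B.toGCA B.Dd m x y)
      = bvBracket B.toGCA B.Dd (m + n) (D x) y
        + ((n * (m + 1)).negOnePow : ℤ) • bvBracket B.toGCA B.Dd m x (D y)

variable {B : DBV k C} {O : C}

theorem bvBracket_of_Dd_eq_zero {x : C} (hx : B.Dd x = 0) (m : ℤ) (y : C) :
    bvBracket B.toGCA B.Dd m x y = (m.negOnePow : ℤ) • B.Dd (B.mul x y) - B.mul x (B.Dd y) := by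
  rw [bvBracket, hx, map_zero, LinearMap.zero_apply, sub_zero, smul_sub,
    negOnePow_smul_negOnePow_smul]

theorem twistedDiff_eq_of_Dd_eq_zero (hDO : B.Dd O = 0) (y : C) :
    B.twistedDiff O y = B.Q y + B.Dd (B.mul O y) - B.mul O (B.Dd y) := by
  rw [twistedDiff_apply, bvBracket_of_Dd_eq_zero hDO, Int.negOnePow_zero, Units.val_one,
    one_smul, add_sub_assoc]

theorem twistedDiff_smul (hDO : B.Dd O = 0)
    (hQR : ∀ (r : R) (x : C), B.Q (r • x) = r • B.Q x)
    (hDR : ∀ (r : R) (x : C), B.Dd (r • x) = r • B.Dd x)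
    (hmul_smul : ∀ (r : R) (x y : C), B.mul x (r • y) = r • B.mul x y) (r : R) (y : C) :
    B.twistedDiff O (r • y) = r • B.twistedDiff O y := by
  simp only [twistedDiff_eq_of_Dd_eq_zero hDO, hQR, hDR, hmul_smul, smul_add, smul_sub]

theorem isOddDerivation_twistedDiff (hO : O ∈ B.grade 0) :
    B.IsOddDerivation (B.twistedDiff O) := fun m x hx y => by
  rw [twistedDiff_apply, twistedDiff_apply, twistedDiff_apply, B.Q_deriv hx, B.poisson hO hx]
  simp only [zero_add, one_mul, map_add, LinearMap.add_apply, smul_add]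
  abel

theorem Dd_twistedDiff (hDO : B.Dd O = 0) (y : C) :
    B.Dd (B.twistedDiff O y) = -B.twistedDiff O (B.Dd y) := by
  simp only [twistedDiff_eq_of_Dd_eq_zero hDO, map_add, map_sub, B.Dd_sq, map_zero,
    eq_neg_of_add_eq_zero_right (B.QDd y)]
  abel

theorem twistedDiff_self [NeZero (2 : k)]
    (hmc : B.Q O + (2 : k)⁻¹ • bvBracket B.toGCA B.Dd 0 O O = 0) :
    B.twistedDiff O O = -B.Q O := by
  have hbr : bvBracket B.toGCA B.Dd 0 O O = (2 : k) • -B.Q O :=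
    (inv_smul_eq_iff₀ two_ne_zero).mp (eq_neg_of_add_eq_zero_right hmc)
  rw [twistedDiff_apply, hbr, two_smul]
  abel

namespace IsGradedDerivation

variable {n : ℤ} {D : C →+ C} {DR : R →+ R}

theorem map_twistedDiff (hD : B.IsGradedDerivation n D DR) (hO : O ∈ B.grade 0)
    (hDDO : B.Dd (D O) = 0) (y : C) :
    D (B.twistedDiff O y)
      = (n.negOnePow : ℤ) • B.twistedDiff O (D y) + (n.negOnePow : ℤ) • B.Dd (B.mul (D O) y)
        - B.mul (D O) (B.Dd y) := by
  rw [twistedDiff_apply, map_add, hD.map_Q, hD.map_bvBracket 0 O y hO,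
    bvBracket_of_Dd_eq_zero hDDO, twistedDiff_apply, zero_add, zero_add, mul_one]
  module

theorem twistedDiff_map_eq_zero [NeZero (2 : k)] (hD : B.IsGradedDerivation n D DR)
    (hO : O ∈ B.grade 0) (hmc : B.Q O + (2 : k)⁻¹ • bvBracket B.toGCA B.Dd 0 O O = 0)
    (hDO : B.Dd O = 0) (hDDO : B.Dd (D O) = 0) : B.twistedDiff O (D O) = 0 := by
  have h := hD.map_twistedDiff hO hDDO O
  have hcomm : B.mul (D O) O = B.mul O (D O) := by
    rw [B.supercomm (hD.mem 0 O hO) hO, mul_zero, Int.negOnePow_zero, Units.val_one, one_smul]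
  have hQc : B.twistedDiff O (D O) = B.Q (D O) + B.Dd (B.mul O (D O)) := by
    rw [twistedDiff_eq_of_Dd_eq_zero hDO, hDDO, map_zero, sub_zero]
  rw [twistedDiff_self hmc, map_neg, hD.map_Q, hDO, map_zero, sub_zero, hcomm] at h
  have h2 : (2 : k) • ((n.negOnePow : ℤ) • B.twistedDiff O (D O)) = 0 := by
    rw [two_smul]
    linear_combination (norm := module) -h + (n.negOnePow : ℤ) • hQc
  rw [smul_eq_zero_iff_right two_ne_zero] at h2
  rw [← negOnePow_smul_negOnePow_smul n (B.twistedDiff O (D O)), h2, smul_zero]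

end IsGradedDerivation

theorem Dd_mem_range_twistedDiff {e : A → C} (hDO : B.Dd O = 0)
    (hDR : ∀ (r : R) (x : C), B.Dd (r • x) = r • B.Dd x) (hDe : ∀ s, B.Dd (e s) = 0)
    (hspan : ∀ x : C, B.twistedDiff O x = 0 →
      ∃ (c : A → R) (y : C), x = ∑ s, c s • e s + B.twistedDiff O y)
    {x : C} (hx : B.twistedDiff O x = 0) : B.Dd x ∈ (B.twistedDiff O).range := by
  obtain ⟨c, y, rfl⟩ := hspan x hx
  refine ⟨-B.Dd y, ?_⟩
  simp only [map_add, map_sum, hDR, hDe, smul_zero, sum_const_zero, zero_add, Dd_twistedDiff hDO,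
    map_neg]

variable {g : A → ℤ} {pd : A → C →+ C} {pdR : A → R →+ R} {Aco : A → A → A → R}
  {L : A → A → C}

theorem sum_pdR_smul_eq (hpd : ∀ a, B.IsGradedDerivation (g a) (pd a) (pdR a))
    (hS : B.IsStructureConstants (B.twistedDiff O) g (fun s => pd s O) Aco L)
    (hOab : ∀ a b, pd a (pd b O) = B.Dd (L a b)) (hDOa : ∀ a, B.Dd (pd a O) = 0)
    (hO : O ∈ B.grade 0) (x y c : A) :
    ∑ s, pdR x (Aco y c s) • pd s O
      = B.mul (B.Dd (L x y)) (pd c O)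
        + ((g x * g y).negOnePow : ℤ) • B.mul (pd y O) (B.Dd (L x c))
        - ∑ s, Aco y c s • B.Dd (L x s)
        - ((g x).negOnePow : ℤ) • B.Dd (B.mul (pd x O) (L y c))
        + B.mul (pd x O) (B.Dd (L y c))
        - ((g x).negOnePow : ℤ) • B.twistedDiff O (pd x (L y c)) := by
  have h := congrArg (pd x) (hS.mul_eq y c)
  rw [(hpd x).map_mul (g y) _ _ (hS.mem y), hOab, hOab, map_add, map_sum,
    (hpd x).map_twistedDiff hO (hDOa x)] at h
  simp only [(hpd x).map_smul, hOab, sum_add_distrib] at h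
  linear_combination (norm := module) -h

theorem potentiality_defect_mem_range (hpd : ∀ a, B.IsGradedDerivation (g a) (pd a) (pdR a))
    (hS : B.IsStructureConstants (B.twistedDiff O) g (fun s => pd s O) Aco L)
    (hOab : ∀ a b, pd a (pd b O) = B.Dd (L a b)) (hDOa : ∀ a, B.Dd (pd a O) = 0)
    (hO : O ∈ B.grade 0) (hDO : B.Dd O = 0)
    (hQR : ∀ (r : R) (x : C), B.Q (r • x) = r • B.Q x)
    (hDR : ∀ (r : R) (x : C), B.Dd (r • x) = r • B.Dd x)
    (hmul_smul : ∀ (r : R) (x y : C), B.mul x (r • y) = r • B.mul x y)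
    (hspan : ∀ x : C, B.twistedDiff O x = 0 →
      ∃ (c : A → R) (y : C), x = ∑ s, c s • pd s O + B.twistedDiff O y)
    (a b c : A) :
    ∑ s, (pdR a (Aco b c s) - ((g a * g b).negOnePow : ℤ) • pdR b (Aco a c s)) • pd s O
      ∈ (B.twistedDiff O).range := by
  have hd := isOddDerivation_twistedDiff hO
  have hd_smul := twistedDiff_smul hDO hQR hDR hmul_smul
  set ε : ℤ := ((g a * g b).negOnePow : ℤ) with hε
  set P := B.mulMulPrimitive g (fun s => pd s O) Aco L
  have hεε : ε • ε • B.mul (pd a O) (B.Dd (L b c)) = B.mul (pd a O) (B.Dd (L b c)) :=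
    negOnePow_smul_negOnePow_smul _ _
  have hεba : ((g b * g a).negOnePow : ℤ) = ε := by rw [hε, mul_comm]
  have hdefect : ∑ s, (pdR a (Aco b c s) - ε • pdR b (Aco a c s)) • pd s O
      = B.mul (B.Dd (L a b - ε • L b a)) (pd c O) + B.Dd (ε • P b a c - P a b c)
        - B.twistedDiff O (((g a).negOnePow : ℤ) • pd a (L b c)
          - ε • ((g b).negOnePow : ℤ) • pd b (L a c)) := by
    rw [sum_sub_zsmul_smul, sum_pdR_smul_eq hpd hS hOab hDOa hO,
      sum_pdR_smul_eq hpd hS hOab hDOa hO, hεba]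
    simp only [P, GCA.mulMulPrimitive, map_sub, map_add, map_zsmul, map_sum, hDR,
      LinearMap.sub_apply, LinearMap.smul_apply]
    linear_combination (norm := module) -hεε
  have hu_mem : B.Dd (L a b - ε • L b a) ∈ B.grade (g a + g b) := by
    rw [map_sub, map_zsmul, ← hOab, ← hOab]
    refine sub_mem ?_ (zsmul_mem ?_ ε)
    · simpa only [add_comm] using (hpd a).mem _ _ (hS.mem b)
    · exact (hpd b).mem _ _ (hS.mem a)
  rw [hdefect]
  refine sub_mem (add_mem ?_ ?_) ⟨_, rfl⟩
  · refine hd.mul_mem_range ?_ hu_mem (hS.mem c) (hS.map_eq_zero c)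
    exact Dd_mem_range_twistedDiff hDO hDR hDOa hspan (hS.map_sub_zsmul_eq_zero a b)
  · exact Dd_mem_range_twistedDiff hDO hDR hDOa hspan
      (hS.map_sub_mulMulPrimitive_eq_zero hd hd_smul hmul_smul a b c)

end DBV

theorem structure_constants_potentiality_general [CharZero k]
    {R A : Type} [CommRing R] [Module R C]
    [Fintype A]
    (B : DBV k C)
    (hQR : ∀ (r : R) (x : C), B.Q (r • x) = r • B.Q x)
    (hDR : ∀ (r : R) (x : C), B.Dd (r • x) = r • B.Dd x)
    (hRmul₂ : ∀ (r : R) (x y : C), B.mul x (r • y) = r • B.mul x y)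
    (g : A → ℤ) (pd : A → C →+ C) (pdR : A → R →+ R)
    (hpd_smul : ∀ (a : A) (r : R) (x : C), pd a (r • x) = pdR a r • x + r • pd a x)
    (hpdQ : ∀ (a : A) (x : C), pd a (B.Q x) = ((g a).negOnePow : ℤ) • B.Q (pd a x))
    (hpd_mem : ∀ (a : A) (m : ℤ) (x : C), x ∈ B.grade m → pd a x ∈ B.grade (m + g a))
    (hpd_mul : ∀ (a : A) (m : ℤ) (x y : C), x ∈ B.grade m →
      pd a (B.mul x y)
        = B.mul (pd a x) y + ((g a * m).negOnePow : ℤ) • B.mul x (pd a y))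
    (hpd_br : ∀ (a : A) (m : ℤ) (x y : C), x ∈ B.grade m →
      pd a (bvBracket B.toGCA B.Dd m x y)
        = bvBracket B.toGCA B.Dd (m + g a) (pd a x) y
          + ((g a * (m + 1)).negOnePow : ℤ) • bvBracket B.toGCA B.Dd m x (pd a y))
    (O : C) (L : A → A → C) (Aco : A → A → A → R)
    (hO : O ∈ B.grade 0)
    (hmc : B.Q O + (2 : k)⁻¹ • bvBracket B.toGCA B.Dd 0 O O = 0)
    (hDO : B.Dd O = 0)
    (hDOa : ∀ a : A, B.Dd (pd a O) = 0)
    (hOab : ∀ a b : A, pd a (pd b O) = B.Dd (L a b))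
    (hrel : ∀ a b : A,
      B.mul (pd a O) (pd b O)
        = (∑ r : A, Aco a b r • pd r O) + B.Q (L a b)
          + bvBracket B.toGCA B.Dd 0 O (L a b))
    (hindep : ∀ (c : A → R) (y : C),
      (∑ a : A, c a • pd a O) = B.Q y + bvBracket B.toGCA B.Dd 0 O y → ∀ a, c a = 0)
    (hspan : ∀ x : C, B.Q x + bvBracket B.toGCA B.Dd 0 O x = 0 →
      ∃ (c : A → R) (y : C),
        x = (∑ a : A, c a • pd a O) + (B.Q y + bvBracket B.toGCA B.Dd 0 O y)) :
    ∀ a b c r : A,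
      pdR a (Aco b c r) = ((g a * g b).negOnePow : ℤ) • pdR b (Aco a c r) := by
  intro a b c r
  have hpd : ∀ a, B.IsGradedDerivation (g a) (pd a) (pdR a) := fun a =>
    ⟨hpd_smul a, hpdQ a, hpd_mem a, hpd_mul a, hpd_br a⟩
  have hS : B.IsStructureConstants (B.twistedDiff O) g (fun s => pd s O) Aco L :=
    { mem := fun a => by simpa only [zero_add] using hpd_mem a 0 O hO
      map_eq_zero := fun a => (hpd a).twistedDiff_map_eq_zero hO hmc hDO (hDOa a)
      mul_eq := fun a b => (hrel a b).trans (add_assoc _ _ _)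
      coeff_eq_zero := hindep }
  obtain ⟨y, hy⟩ :=
    DBV.potentiality_defect_mem_range hpd hS hOab hDOa hO hDO hQR hDR hRmul₂ hspan a b c
  exact sub_eq_zero.mp (hS.coeff_eq_zero _ y hy.symm r)

/-- Theorem 12, potentiality: let `O` be a special versal solution
in a semi-classical dBV algebra (the dBV algebra `B` stands for `C ⊗ k[[H*]]`,
an `R = k[[H*]]`-module), with partials `O_α = ∂O/∂tᵅ ∈ Ker Δ`,
`∂_α O_β = Δ L_{αβ}`, and
`O_α·O_β = A_{αβ}^γ • O_γ + Q L_{αβ} + (O, L_{αβ})`, where the classes `[O_σ]`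
form a basis of the cohomology of `𝒬 = Q + (O,·)`.  Then the structure constants
satisfy the potentiality (flatness) relation
`∂_α A_{βγ}^ρ = (-1)^{|α||β|} ∂_β A_{αγ}^ρ`; equivalently
`(A)_β^γ = dtᵅ A_{αβ}^γ` is the connection 1-form of a linear pencil of
torsion-free flat connections. -/
theorem structure_constants_potentiality [CharZero k]
    {R A : Type} [CommRing R] [Algebra k R] [Module R C] [IsScalarTower k R C]
    [Fintype A]
    (B : DBV k C)
    (hQR : ∀ (r : R) (x : C), B.Q (r • x) = r • B.Q x)
    (hDR : ∀ (r : R) (x : C), B.Dd (r • x) = r • B.Dd x)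
    (hRmul₁ : ∀ (r : R) (x y : C), B.mul (r • x) y = r • B.mul x y)
    (hRmul₂ : ∀ (r : R) (x y : C), B.mul x (r • y) = r • B.mul x y)
    (hRgrade : ∀ (r : R) (m : ℤ) (x : C), x ∈ B.grade m → r • x ∈ B.grade m)
    (g : A → ℤ) (pd : A → C →+ C) (pdR : A → R →+ R)
    (hpdR_deriv : ∀ (a : A) (r s : R), pdR a (r * s) = pdR a r * s + r * pdR a s)
    (hpd_smul : ∀ (a : A) (r : R) (x : C), pd a (r • x) = pdR a r • x + r • pd a x)
    (hpdQ : ∀ (a : A) (x : C), pd a (B.Q x) = ((g a).negOnePow : ℤ) • B.Q (pd a x))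
    (hpdD : ∀ (a : A) (x : C), pd a (B.Dd x) = ((g a).negOnePow : ℤ) • B.Dd (pd a x))
    (hpd_mem : ∀ (a : A) (m : ℤ) (x : C), x ∈ B.grade m → pd a x ∈ B.grade (m + g a))
    (hpd_mul : ∀ (a : A) (m : ℤ) (x y : C), x ∈ B.grade m →
      pd a (B.mul x y)
        = B.mul (pd a x) y + ((g a * m).negOnePow : ℤ) • B.mul x (pd a y))
    (hpd_br : ∀ (a : A) (m : ℤ) (x y : C), x ∈ B.grade m →
      pd a (bvBracket B.toGCA B.Dd m x y)
        = bvBracket B.toGCA B.Dd (m + g a) (pd a x) y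
          + ((g a * (m + 1)).negOnePow : ℤ) • bvBracket B.toGCA B.Dd m x (pd a y))
    (O : C) (L : A → A → C) (Aco : A → A → A → R)
    (hO : O ∈ B.grade 0)
    (hmc : B.Q O + (2 : k)⁻¹ • bvBracket B.toGCA B.Dd 0 O O = 0)
    (hDO : B.Dd O = 0)
    (hDOa : ∀ a : A, B.Dd (pd a O) = 0)
    (hOab : ∀ a b : A, pd a (pd b O) = B.Dd (L a b))
    (hrel : ∀ a b : A,
      B.mul (pd a O) (pd b O)
        = (∑ r : A, Aco a b r • pd r O) + B.Q (L a b)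
          + bvBracket B.toGCA B.Dd 0 O (L a b))
    (hindep : ∀ (c : A → R) (y : C),
      (∑ a : A, c a • pd a O) = B.Q y + bvBracket B.toGCA B.Dd 0 O y → ∀ a, c a = 0)
    (hspan : ∀ x : C, B.Q x + bvBracket B.toGCA B.Dd 0 O x = 0 →
      ∃ (c : A → R) (y : C),
        x = (∑ a : A, c a • pd a O) + (B.Q y + bvBracket B.toGCA B.Dd 0 O y)) :
    ∀ a b c r : A,
      pdR a (Aco b c r) = ((g a * g b).negOnePow : ℤ) • pdR b (Aco a c r) :=
  structure_constants_potentiality_general B hQR hDR hRmul₂ g pd pdR hpd_smul hpdQ hpd_mem hpd_mul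
    hpd_br O L Aco hO hmc hDO hDOa hOab hrel hindep hspan
end

section
/- Let (C, Δ, Q, ·) be a semi-classical dBV algebra with a BK integral ∫, and let O be a versal solution with ΔO = 0. Then ∫ is also a BK integral for the versal dBV algebra with differential 𝒬 = Q + (O,·): in particular ∫ 𝒬a = 0 for all a, and ∫(𝒬a)·b = -(-1)^{|a|} ∫ a·(𝒬b). -/
variable {k C : Type} [Field k] [AddCommGroup C] [Module k C]

/-! The versal differential is `𝒬 = Q + (O, ·)`. Since `ΔO = 0` and `O` is even, `(O, ·)` is the
graded commutator `[Δ, O·]` of the BK-self-adjoint `Δ` with the self-adjoint multiplication by `O`,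
hence BK-skew like `Q`; so `𝒬` is BK-skew, and as `𝒬 1 = 0`, pairing with `1` gives `∫ 𝒬a = 0`. -/

def IsGradedSkewAdjoint (G : GCA k C) (I : C →ₗ[k] k) (D : C → C) : Prop :=
  ∀ (m : ℤ) (a b : C), a ∈ G.grade m →
    I (G.mul (D a) b) = -((m.negOnePow : ℤ) • I (G.mul a (D b)))

def IsGradedSelfAdjoint (G : GCA k C) (I : C →ₗ[k] k) (D : C → C) : Prop :=
  ∀ (m : ℤ) (a b : C), a ∈ G.grade m →
    I (G.mul (D a) b) = (m.negOnePow : ℤ) • I (G.mul a (D b))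

namespace GCA

variable (G : GCA k C)

theorem mul_comm_of_mem_grade_zero {n : ℤ} {a b : C} (ha : a ∈ G.grade 0) (hb : b ∈ G.grade n) :
    G.mul a b = G.mul b a := by
  simpa using G.supercomm ha hb

end GCA

namespace DBV

theorem Q_one (B : DBV k C) : B.Q B.one = 0 := by
  simpa [B.one_mul, B.mul_one] using B.Q_deriv (m := 0) (b := B.one) B.one_mem

end DBV

section bvBracket

variable (G : GCA k C) (D : C →ₗ[k] C)

theorem bvBracket_one_right (hD1 : D G.one = 0) (m : ℤ) (a : C) :
    bvBracket G D m a G.one = 0 := by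
  simp [bvBracket, G.mul_one, hD1]

theorem bvBracket_zero_of_apply_eq_zero {a : C} (hDa : D a = 0) (b : C) :
    bvBracket G D 0 a b = D (G.mul a b) - G.mul a (D b) := by
  simp [bvBracket, hDa]

end bvBracket

namespace IsGradedSkewAdjoint

variable {G : GCA k C} {I : C →ₗ[k] k}

theorem add {D₁ D₂ : C → C} (h₁ : IsGradedSkewAdjoint G I D₁) (h₂ : IsGradedSkewAdjoint G I D₂) :
    IsGradedSkewAdjoint G I (fun a => D₁ a + D₂ a) := by
  intro m a b ha
  simp only [map_add, LinearMap.add_apply, h₁ m a b ha, h₂ m a b ha, smul_add, neg_add]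

theorem apply_eq_zero {D : C → C} (hD : IsGradedSkewAdjoint G I D) (hD1 : D G.one = 0) (b : C) :
    I (D b) = 0 := by
  simpa [hD1, G.one_mul] using hD 0 G.one b G.one_mem

end IsGradedSkewAdjoint

theorem isGradedSkewAdjoint_bvBracket (B : DBV k C) {I : C →ₗ[k] k}
    (hID : IsGradedSelfAdjoint B.toGCA I B.Dd) {O : C} (hO : O ∈ B.grade 0) (hDO : B.Dd O = 0) :
    IsGradedSkewAdjoint B.toGCA I (bvBracket B.toGCA B.Dd 0 O) := by
  intro m a b ha
  have hOa : B.mul O a ∈ B.grade m := by simpa using B.mul_mem hO ha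
  have hODa : B.mul O (B.Dd a) = B.mul (B.Dd a) O :=
    B.mul_comm_of_mem_grade_zero hO (B.Dd_mem ha)
  have hOaDb : B.mul (B.mul O a) (B.Dd b) = B.mul a (B.mul O (B.Dd b)) := by
    rw [B.mul_comm_of_mem_grade_zero hO ha, B.mul_assoc]
  have hODab : B.mul (B.mul O (B.Dd a)) b = B.mul (B.Dd a) (B.mul O b) := by
    rw [hODa, B.mul_assoc]
  rw [bvBracket_zero_of_apply_eq_zero _ _ hDO, bvBracket_zero_of_apply_eq_zero _ _ hDO]
  simp only [map_sub, LinearMap.sub_apply]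
  rw [hID m _ b hOa, hOaDb, hODab, hID m a _ ha, smul_sub]
  abel

theorem BK_integral_for_versal_general (B : DBV k C) (I : C →ₗ[k] k)
    (hIQ : ∀ (m : ℤ) (a b : C), a ∈ B.grade m →
      I (B.mul (B.Q a) b) = -((m.negOnePow : ℤ) • I (B.mul a (B.Q b))))
    (hID : ∀ (m : ℤ) (a b : C), a ∈ B.grade m →
      I (B.mul (B.Dd a) b) = (m.negOnePow : ℤ) • I (B.mul a (B.Dd b)))
    (hD1 : B.Dd B.one = 0)
    (O : C) (hO : O ∈ B.grade 0)
    (hDO : B.Dd O = 0) :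
    (∀ a : C, I (B.Q a + bvBracket B.toGCA B.Dd 0 O a) = 0) ∧
    (∀ (m : ℤ) (a b : C), a ∈ B.grade m →
      I (B.mul (B.Q a + bvBracket B.toGCA B.Dd 0 O a) b)
        = -((m.negOnePow : ℤ) •
            I (B.mul a (B.Q b + bvBracket B.toGCA B.Dd 0 O b)))) := by
  have hversal : IsGradedSkewAdjoint B.toGCA I (fun a => B.Q a + bvBracket B.toGCA B.Dd 0 O a) :=
    IsGradedSkewAdjoint.add hIQ (isGradedSkewAdjoint_bvBracket B hID hO hDO)
  have hversal_one : B.Q B.one + bvBracket B.toGCA B.Dd 0 O B.one = 0 := by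
    rw [B.Q_one, bvBracket_one_right _ _ hD1, add_zero]
  exact ⟨hversal.apply_eq_zero hversal_one, hversal⟩

/-- let `∫ = I` be a BK integral on a semi-classical dBV algebra
(`∫(Qa)·b = -(-1)^{|a|} ∫a·(Qb)` and `∫(Δa)·b = (-1)^{|a|} ∫a·(Δb)`), and let `O`
be a versal degree-zero solution of `QO + ½(O,O) = 0` with `ΔO = 0`.  Then `∫` is
again a BK integral for the versal differential `𝒬 = Q + (O,·)`: `∫ 𝒬a = 0` for
all `a`, and `∫(𝒬a)·b = -(-1)^{|a|} ∫a·(𝒬b)`. -/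
theorem BK_integral_for_versal [CharZero k] (B : DBV k C) (I : C →ₗ[k] k)
    (hIQ : ∀ (m : ℤ) (a b : C), a ∈ B.grade m →
      I (B.mul (B.Q a) b) = -((m.negOnePow : ℤ) • I (B.mul a (B.Q b))))
    (hID : ∀ (m : ℤ) (a b : C), a ∈ B.grade m →
      I (B.mul (B.Dd a) b) = (m.negOnePow : ℤ) • I (B.mul a (B.Dd b)))
    (hD1 : B.Dd B.one = 0)
    (O : C) (hO : O ∈ B.grade 0)
    (hmc : B.Q O + (2 : k)⁻¹ • bvBracket B.toGCA B.Dd 0 O O = 0)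
    (hDO : B.Dd O = 0) :
    (∀ a : C, I (B.Q a + bvBracket B.toGCA B.Dd 0 O a) = 0) ∧
    (∀ (m : ℤ) (a b : C), a ∈ B.grade m →
      I (B.mul (B.Q a + bvBracket B.toGCA B.Dd 0 O a) b)
        = -((m.negOnePow : ℤ) •
            I (B.mul a (B.Q b + bvBracket B.toGCA B.Dd 0 O b)))) :=
  BK_integral_for_versal_general B I hIQ hID hD1 O hO hDO
end
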